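/- Let e₀, e₁, e₂, e₃ be the standard basis of ℝ⁴ with dual basis e⁰, e¹, e², e³, and for i ∈ {1,2,3} define the alternating 2-forms θ_i = e⁰ ∧ eⁱ + (1/2) Σ_{j,k} ε_{ijk} eʲ ∧ eᵏ. Then for all a, b ∈ {0,1,2,3}, (1/6) Σ_{i,j,k} ε_{ijk} (e_a ⌟ θ_i) ∧ (e_b ⌟ θ_j) ∧ θ_k = δ_{ab} · e⁰ ∧ e¹ ∧ e² ∧ e³. -/

import Mathlib

open scoped TensorProduct Matrix

/-- The wedge product of an alternating `m`-form and an alternating `n`-form on a real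
vector space `V`, as an alternating `(m+n)`-form. -/
noncomputable def wedge {V : Type*} [AddCommGroup V] [Module ℝ V] {m n : ℕ}
    (ω : V [⋀^Fin m]→ₗ[ℝ] ℝ) (η : V [⋀^Fin n]→ₗ[ℝ] ℝ) :
    V [⋀^Fin (m + n)]→ₗ[ℝ] ℝ :=
  ((TensorProduct.lid ℝ ℝ).toLinearMap.compAlternatingMap (ω.domCoprod η)).domDomCongr
    finSumFinEquiv

/-- The interior product `u ⌟ ω` of a vector `u` with an alternating 2-form `ω`:
the 1-form `v ↦ ω(u, v)`. -/
noncomputable def iprod {V : Type*} [AddCommGroup V] [Module ℝ V]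
    (u : V) (ω : V [⋀^Fin 2]→ₗ[ℝ] ℝ) : V [⋀^Fin 1]→ₗ[ℝ] ℝ :=
  ω.curryLeft u

/-- The Levi-Civita permutation symbol on `{1,2,3}` (indexed by `Fin 3`), as a real number:
`1` for even permutations of `(1,2,3)`, `-1` for odd permutations, and `0` otherwise. -/
noncomputable def levicivita (i j k : Fin 3) : ℝ :=
  (((i : ℝ) - (j : ℝ)) * ((j : ℝ) - (k : ℝ)) * ((k : ℝ) - (i : ℝ))) / 2

/-- `e^i`, the dual basis to the standard basis of `ℝ⁴`, as alternating 1-forms. -/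
noncomputable def E (i : Fin 4) : (Fin 4 → ℝ) [⋀^Fin 1]→ₗ[ℝ] ℝ :=
  AlternatingMap.ofSubsingleton ℝ (Fin 4 → ℝ) ℝ 0 (LinearMap.proj i)

/-- The standard basis vectors `e_a` of `ℝ⁴`. -/
noncomputable def e (a : Fin 4) : Fin 4 → ℝ := Pi.single a 1

/-- The standard 2-forms `θᵢ = e⁰ ∧ eⁱ + (1/2) Σ_{jk} ε_{ijk} eʲ ∧ eᵏ` on `ℝ⁴`,
for `i ∈ {1,2,3}`. -/
noncomputable def θ (i : Fin 3) : (Fin 4 → ℝ) [⋀^Fin 2]→ₗ[ℝ] ℝ :=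
  wedge (E 0) (E i.succ)
    + (1 / 2 : ℝ) • ∑ j : Fin 3, ∑ k : Fin 3, levicivita i j k • wedge (E j.succ) (E k.succ)

/-- The standard volume form `e⁰ ∧ e¹ ∧ e² ∧ e³` on `ℝ⁴`. -/
noncomputable def μ₀ : (Fin 4 → ℝ) [⋀^Fin 4]→ₗ[ℝ] ℝ :=
  wedge (wedge (wedge (E 0) (E 1)) (E 2)) (E 3)

/-!
Both sides are top-degree forms on `ℝ⁴`, hence multiples of the determinant, so it suffices to
compare their values on the standard basis. There, the `(2, 2)`-shuffle expansion of the wedge of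
two 2-forms turns the left side into a polynomial in the coefficients `θₖ(e_c, e_d)`, and the
identity becomes a finite check.
-/

open Equiv Finset
open scoped Nat

theorem AlternatingMap.sum_apply {R M N ι κ : Type*} [Semiring R] [AddCommMonoid M] [Module R M]
    [AddCommMonoid N] [Module R N] (s : Finset κ) (f : κ → M [⋀^ι]→ₗ[R] N) (v : ι → M) :
    (∑ i ∈ s, f i) v = ∑ i ∈ s, f i v :=
  map_sum ({ toFun := fun g => g v, map_zero' := rfl, map_add' := fun _ _ => rfl } :
    (M [⋀^ι]→ₗ[R] N) →+ N) f s

theorem AlternatingMap.map_vecCons_swap {R M N : Type*} [Semiring R] [AddCommMonoid M]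
    [Module R M] [AddCommGroup N] [Module R N] (α : M [⋀^Fin 2]→ₗ[R] N) (x y : M) :
    α ![y, x] = -α ![x, y] := by
  have hxy : ![y, x] = ![x, y] ∘ swap 0 1 := by ext i; fin_cases i <;> rfl
  rw [hxy, α.map_swap _ zero_ne_one]

theorem Fintype.sum_perm_fin_succ {M : Type*} [AddCommMonoid M] {n : ℕ}
    (f : Perm (Fin (n + 1)) → M) :
    ∑ σ, f σ = ∑ p, ∑ σ, f (Perm.decomposeFin.symm (p, σ)) := by
  rw [univ_perm_fin_succ, sum_map, ← univ_product_univ, sum_product]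
  rfl

theorem Fintype.sum_perm_fin_zero {M : Type*} [AddCommMonoid M] (f : Perm (Fin 0) → M) :
    ∑ σ, f σ = f 1 :=
  Fintype.sum_subsingleton f 1

theorem Equiv.Perm.decomposeFin_symm_apply_two {n : ℕ} (p : Fin (n + 3))
    (σ : Perm (Fin (n + 2))) :
    Perm.decomposeFin.symm (p, σ) 2 = swap 0 p (σ 1).succ :=
  Perm.decomposeFin_symm_apply_succ σ p 1

theorem Equiv.Perm.decomposeFin_symm_apply_three {n : ℕ} (p : Fin (n + 4))
    (σ : Perm (Fin (n + 3))) :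
    Perm.decomposeFin.symm (p, σ) 3 = swap 0 p (σ 2).succ :=
  Perm.decomposeFin_symm_apply_succ σ p 2

section Wedge

variable {V : Type*} [AddCommGroup V] [Module ℝ V]

theorem wedge_apply {m n : ℕ} (ω : V [⋀^Fin m]→ₗ[ℝ] ℝ) (η : V [⋀^Fin n]→ₗ[ℝ] ℝ)
    (v : Fin (m + n) → V) :
    wedge ω η v = (m ! * n ! : ℝ)⁻¹ * ∑ τ : Perm (Fin (m + n)),
      (Perm.sign τ : ℝ) * (ω (v ∘ τ ∘ Fin.castAdd n) * η (v ∘ τ ∘ Fin.natAdd m)) := by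
  have h := congrArg (fun F => TensorProduct.lid ℝ ℝ (F (v ∘ finSumFinEquiv)))
    (MultilinearMap.domCoprod_alternization_eq ω η)
  simp only [MultilinearMap.alternatization_apply, MultilinearMap.domDomCongr_apply,
    MultilinearMap.domCoprod_apply, AlternatingMap.coe_multilinearMap, AlternatingMap.smul_apply,
    Fintype.card_fin, map_sum, map_nsmul, TensorProduct.lid_tmul, Units.smul_def, map_zsmul] at h
  rw [eq_inv_mul_iff_mul_eq₀ (by positivity), ← Nat.cast_mul, ← nsmul_eq_mul]
  change _ • TensorProduct.lid ℝ ℝ ((ω.domCoprod η) (v ∘ finSumFinEquiv)) = _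
  rw [← h]
  refine Fintype.sum_equiv finSumFinEquiv.permCongr _ _ fun σ => ?_
  simp only [Perm.sign_permCongr, zsmul_eq_mul, smul_eq_mul, Function.comp_def,
    permCongr_apply, ← finSumFinEquiv_apply_left, ← finSumFinEquiv_apply_right, symm_apply_apply]

theorem wedge_apply_one_one (f g : V [⋀^Fin 1]→ₗ[ℝ] ℝ) (v : Fin 2 → V) :
    wedge f g v = f ![v 0] * g ![v 1] - f ![v 1] * g ![v 0] := by
  rw [wedge_apply]
  simp [Fintype.sum_perm_fin_succ, Function.comp_def, Fin.fin_one_eq_zero,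
    Matrix.cons_fin_one, sub_eq_add_neg]

theorem wedge_apply_two_two (ω η : V [⋀^Fin 2]→ₗ[ℝ] ℝ) (v : Fin 4 → V) :
    wedge ω η v = ω ![v 0, v 1] * η ![v 2, v 3] - ω ![v 0, v 2] * η ![v 1, v 3]
      + ω ![v 0, v 3] * η ![v 1, v 2] + ω ![v 1, v 2] * η ![v 0, v 3]
      - ω ![v 1, v 3] * η ![v 0, v 2] + ω ![v 2, v 3] * η ![v 0, v 1] := by
  have hpair (τ : Perm (Fin 4)) (i : Fin 2 → Fin 4) :
      v ∘ τ ∘ i = ![v (τ (i 0)), v (τ (i 1))] :=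
    (FinVec.etaExpand_eq _).symm
  rw [wedge_apply]
  simp only [hpair, Fintype.sum_perm_fin_succ, Fintype.sum_perm_fin_zero, Fin.sum_univ_succ,
    Fin.sum_univ_zero]
  simp +decide only [Nat.factorial_two, Nat.reduceAdd, Fin.isValue, Fin.reduceCastAdd,
    Fin.natAdd_eq_addNat, Fin.reduceAddNat, Fin.reduceSucc, Fin.succ_zero_eq_one,
    Fin.succ_one_eq_two, Perm.decomposeFin_symm_of_one, Perm.decomposeFin_symm_of_refl,
    Perm.decomposeFin_symm_apply_zero, Perm.decomposeFin_symm_apply_one,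
    Perm.decomposeFin_symm_apply_two, Perm.decomposeFin_symm_apply_three,
    Perm.decomposeFin.symm_sign, Perm.sign_refl, Perm.sign_swap', swap_self, refl_apply,
    swap_apply_left, swap_apply_right, swap_apply_def, ↓reduceIte, Units.val_mul, Units.val_one,
    Units.val_neg, Int.cast_mul, Int.cast_one, Int.cast_neg]
  simp only [AlternatingMap.map_vecCons_swap _ (v 0) (v 1),
    AlternatingMap.map_vecCons_swap _ (v 0) (v 2), AlternatingMap.map_vecCons_swap _ (v 0) (v 3),
    AlternatingMap.map_vecCons_swap _ (v 1) (v 2), AlternatingMap.map_vecCons_swap _ (v 1) (v 3),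
    AlternatingMap.map_vecCons_swap _ (v 2) (v 3)]
  ring

theorem iprod_apply (u : V) (ω : V [⋀^Fin 2]→ₗ[ℝ] ℝ) (x : V) : iprod u ω ![x] = ω ![u, x] :=
  rfl

end Wedge

theorem E_apply (i : Fin 4) (v : Fin 1 → Fin 4 → ℝ) : E i v = v 0 i := rfl

theorem alternatingMap_eq_of_apply_e {f g : (Fin 4 → ℝ) [⋀^Fin 4]→ₗ[ℝ] ℝ} (h : f e = g e) :
    f = g := by
  have hbasis : ⇑(Pi.basisFun ℝ (Fin 4)) = e := funext (Pi.basisFun_apply ℝ (Fin 4))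
  rw [f.eq_smul_basis_det (Pi.basisFun ℝ (Fin 4)), g.eq_smul_basis_det (Pi.basisFun ℝ (Fin 4)),
    hbasis, h]

theorem μ₀_apply_e : μ₀ e = 1 := by
  rw [μ₀, wedge_apply]
  simp only [wedge_apply (wedge (E 0) (E 1)) (E 2)]
  norm_num +decide [Fintype.sum_perm_fin_succ, Fin.sum_univ_succ, wedge_apply_one_one, E_apply,
    e, Pi.single_apply, Nat.factorial]

def θMatrix : Fin 3 → Matrix (Fin 4) (Fin 4) ℝ :=
  ![!![0, 1, 0, 0; -1, 0, 0, 0; 0, 0, 0, 1; 0, 0, -1, 0],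
    !![0, 0, 1, 0; 0, 0, 0, -1; -1, 0, 0, 0; 0, 1, 0, 0],
    !![0, 0, 0, 1; 0, 0, 1, 0; 0, -1, 0, 0; -1, 0, 0, 0]]

theorem θ_apply_e (k : Fin 3) (c d : Fin 4) : θ k ![e c, e d] = θMatrix k c d := by
  simp only [θ, AlternatingMap.add_apply, AlternatingMap.smul_apply, wedge_apply_one_one, E_apply,
    smul_eq_mul, Fin.sum_univ_three]
  fin_cases k <;> fin_cases c <;> fin_cases d <;>
    norm_num +decide [θMatrix, levicivita, e, Pi.single_apply]

/-- For the standard triple `(θ₁, θ₂, θ₃)` on `ℝ⁴` and standard basis vectors `e_a, e_b`: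
`(1/6) Σ_{ijk} ε_{ijk} (e_a ⌟ θᵢ) ∧ (e_b ⌟ θⱼ) ∧ θₖ = δ_{ab} e⁰ ∧ e¹ ∧ e² ∧ e³`. -/
theorem standard_triple_metric (a b : Fin 4) :
    (1 / 6 : ℝ) • ∑ i : Fin 3, ∑ j : Fin 3, ∑ k : Fin 3,
        levicivita i j k • wedge (wedge (iprod (e a) (θ i)) (iprod (e b) (θ j))) (θ k)
      = (if a = b then (1 : ℝ) else 0) • μ₀ := by
  refine alternatingMap_eq_of_apply_e ?_
  simp only [AlternatingMap.smul_apply, AlternatingMap.sum_apply, smul_eq_mul, μ₀_apply_e,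
    mul_one, wedge_apply_two_two, wedge_apply_one_one, Matrix.cons_val_zero, Matrix.cons_val_one,
    iprod_apply, θ_apply_e]
  simp only [Fin.sum_univ_three]
  fin_cases a <;> fin_cases b <;> simp [levicivita, θMatrix] <;> norm_num
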